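/- If C_* is an exact (acyclic) complex of projective kH-modules in nonnegative degrees, then the resolution module M(C_*, ∞) is a projective kG-module; equivalently, M(C_*, ∞) is zero in the stable module category of kG. -/

import Mathlib

/-!
Over `R = kH` the module `M` is a direct sum of projectives, and `A = R[C_p]` is generated over
`R` by `Z`, which commutes with `R` and satisfies `Zᵖ = 0`. In this situation `M` is
`A`-projective as soon as some `R`-linear `θ : M → M` has `∑_{a+b=p-1} Zᵃ θ Zᵇ = 1`: applying the
same sum to an `R`-linear section of `(M →₀ A) → M` gives an `A`-linear one (a nilpotent variant
of Higman's criterion). Such a `θ` comes from a contracting homotopy `h` of the exact complex of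
projectives `C_*`: it maps `C₂ⱼ` by `h` to the first copy of `C₂ⱼ₊₁` and the last copy of
`C₂ⱼ₊₁` by `h` to `C₂ⱼ₊₂`, and kills the other copies. On each summand exactly two terms of the
sum survive, and they add up to `dh + hd = 1`.
-/

open MonoidAlgebra Finset

section Lifting

variable {R P X Y W : Type*} [Semiring R] [AddCommMonoid P] [Module R P] [Module.Projective R P]
  [AddCommMonoid X] [Module R X] [AddCommMonoid Y] [Module R Y] [AddCommMonoid W] [Module R W]

theorem Module.Projective.exists_comp_eq_of_range_eq_ker {f : X →ₗ[R] Y} {g : Y →ₗ[R] W}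
    (hfg : LinearMap.range f = LinearMap.ker g) (u : P →ₗ[R] Y) (hu : g ∘ₗ u = 0) :
    ∃ c : P →ₗ[R] X, f ∘ₗ c = u := by
  have hmem : ∀ x, u x ∈ LinearMap.range f := fun x => hfg ▸ LinearMap.congr_fun hu x
  obtain ⟨c, hc⟩ := Module.projective_lifting_property f.rangeRestrict
    (u.codRestrict _ hmem) f.surjective_rangeRestrict
  exact ⟨c, LinearMap.ext fun x => congrArg Subtype.val (LinearMap.congr_fun hc x)⟩

end Lifting

section ContractingHomotopy

variable {R : Type*} [Ring R] {C : ℕ → Type*} [∀ i, AddCommGroup (C i)] [∀ i, Module R (C i)]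
  {d : ∀ i, C (i + 1) →ₗ[R] C i}

theorem exists_homotopy_step (hproj : ∀ i, Module.Projective R (C i))
    (hexact : ∀ i, LinearMap.range (d (i + 1)) = LinearMap.ker (d i)) {n : ℕ}
    {a : C n →ₗ[R] C (n + 1)} (ha : d n ∘ₗ a ∘ₗ d n = d n) :
    ∃ b : C (n + 1) →ₗ[R] C (n + 2), d (n + 1) ∘ₗ b = LinearMap.id - a ∘ₗ d n :=
  Module.Projective.exists_comp_eq_of_range_eq_ker (hexact n) _ <| by
    rw [LinearMap.comp_sub, LinearMap.comp_id, ha, sub_self]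

/-- Successive choices `a n : C n → C (n + 1)` with `d (n + 1) ∘ a (n + 1) = 1 - a n ∘ d n`;
the invariant `d ∘ a ∘ d = d` is what makes the next lift possible. -/
noncomputable def contractingHomotopy (hproj : ∀ i, Module.Projective R (C i))
    (hexact : ∀ i, LinearMap.range (d (i + 1)) = LinearMap.ker (d i))
    (hexact0 : Function.Surjective (d 0)) :
    ∀ n, {a : C n →ₗ[R] C (n + 1) // d n ∘ₗ a ∘ₗ d n = d n}
  | 0 =>
    ⟨(Module.projective_lifting_property (d 0) LinearMap.id hexact0).choose, by
      rw [← LinearMap.comp_assoc,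
        (Module.projective_lifting_property (d 0) LinearMap.id hexact0).choose_spec,
        LinearMap.id_comp]⟩
  | n + 1 =>
    let hb := exists_homotopy_step hproj hexact (contractingHomotopy hproj hexact hexact0 n).2
    ⟨hb.choose, by
      rw [← LinearMap.comp_assoc, hb.choose_spec, LinearMap.sub_comp, LinearMap.id_comp,
        LinearMap.comp_assoc, LinearMap.range_le_ker_iff.mp (hexact n).le,
        LinearMap.comp_zero, sub_zero]⟩

theorem exists_contractingHomotopy (hproj : ∀ i, Module.Projective R (C i))
    (hexact : ∀ i, LinearMap.range (d (i + 1)) = LinearMap.ker (d i))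
    (hexact0 : Function.Surjective (d 0)) :
    ∃ h : ∀ i, C i →ₗ[R] C (i + 1), (∀ x, d 0 (h 0 x) = x) ∧
      ∀ i x, d (i + 1) (h (i + 1) x) + h i (d i x) = x := by
  refine ⟨fun n => (contractingHomotopy hproj hexact hexact0 n).1, fun x => ?_, fun i x => ?_⟩
  · exact LinearMap.congr_fun
      (Module.projective_lifting_property (d 0) LinearMap.id hexact0).choose_spec x
  · exact eq_sub_iff_add_eq.mp <| LinearMap.congr_fun (exists_homotopy_step hproj hexact
      (contractingHomotopy hproj hexact hexact0 i).2).choose_spec x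

end ContractingHomotopy

section EvenOddSum

variable {R J M N : Type*} [Ring R] [DecidableEq J] [AddCommGroup M] [Module R M]
  [AddCommGroup N] [Module R N] {X Y : J → Type*} [∀ j, AddCommGroup (X j)] [∀ j, Module R (X j)]
  [∀ j, AddCommGroup (Y j)] [∀ j, Module R (Y j)] {n : ℕ}

def evenOddSumMap (ιe : ∀ j, X j →ₗ[R] M) (ιo : ∀ j, Fin n → Y j →ₗ[R] M) :
    (DirectSum J fun j => X j × (Fin n → Y j)) →ₗ[R] M :=
  DirectSum.toModule R J M fun j => (ιe j).coprod (LinearMap.lsum R (fun _ => Y j) ℕ (ιo j))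

variable {ιe : ∀ j, X j →ₗ[R] M} {ιo : ∀ j, Fin n → Y j →ₗ[R] M}

theorem evenOddSumMap_lof (j : J) (v : X j × (Fin n → Y j)) :
    evenOddSumMap ιe ιo (DirectSum.lof R J _ j v) = ιe j v.1 + ∑ t, ιo j t (v.2 t) := by
  simp [evenOddSumMap]

theorem evenOddSumMap_lof_inl (j : J) (x : X j) :
    evenOddSumMap ιe ιo (DirectSum.lof R J _ j (x, 0)) = ιe j x := by
  simp [evenOddSumMap_lof]

theorem evenOddSumMap_lof_inr (j : J) (t : Fin n) (y : Y j) :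
    evenOddSumMap ιe ιo (DirectSum.lof R J _ j (0, Pi.single t y)) = ιo j t y := by
  rw [evenOddSumMap_lof, map_zero, zero_add, Fintype.sum_eq_single t fun s hs => by simp [hs]]
  simp

theorem evenOddSumMap_induction (hsurj : Function.Surjective (evenOddSumMap ιe ιo))
    {P : M → Prop} (zero : P 0) (add : ∀ a b, P a → P b → P (a + b))
    (even : ∀ j x, P (ιe j x)) (odd : ∀ j t y, P (ιo j t y)) (m : M) : P m := by
  obtain ⟨w, rfl⟩ := hsurj m
  induction w using DirectSum.induction_on with
  | zero => simpa using zero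
  | of j v =>
    rw [← DirectSum.lof_eq_of R, evenOddSumMap_lof]
    exact add _ _ (even j _) (Finset.sum_induction _ P add zero fun t _ => odd j t _)
  | add w w' hw hw' => simpa using add _ _ hw hw'

theorem exists_linearMap_comp_evenOddSumMap (hbij : Function.Bijective (evenOddSumMap ιe ιo))
    (fe : ∀ j, X j →ₗ[R] N) (fo : ∀ j, Fin n → Y j →ₗ[R] N) :
    ∃ θ : M →ₗ[R] N, (∀ j x, θ (ιe j x) = fe j x) ∧ ∀ j t y, θ (ιo j t y) = fo j t y := by
  set e := LinearEquiv.ofBijective _ hbij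
  have hθ : ∀ w, evenOddSumMap fe fo (e.symm (evenOddSumMap ιe ιo w)) = evenOddSumMap fe fo w :=
    fun w => congrArg (evenOddSumMap fe fo) (e.symm_apply_apply w)
  refine ⟨evenOddSumMap fe fo ∘ₗ e.symm.toLinearMap, fun j x => ?_, fun j t y => ?_⟩
  · simpa [evenOddSumMap_lof_inl] using hθ (DirectSum.lof R J _ j (x, 0))
  · simpa [evenOddSumMap_lof_inr] using hθ (DirectSum.lof R J _ j (0, Pi.single t y))

theorem projective_of_bijective_evenOddSumMap [∀ j, Module.Projective R (X j)]
    [∀ j, Module.Projective R (Y j)] (hbij : Function.Bijective (evenOddSumMap ιe ιo)) :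
    Module.Projective R M :=
  have (j : J) : Module.Projective R (Fin n → Y j) :=
    .of_equiv' (DFinsupp.linearEquivFunOnFintype (R := R) (M := fun _ : Fin n => Y j))
  .of_equiv' (LinearEquiv.ofBijective _ hbij)

end EvenOddSum

section NilpotentTrace

variable {A M N : Type*} [Semiring A] [AddCommGroup M] [Module A M] [AddCommGroup N] [Module A N]

/-- For `Z` nilpotent of order `n` this plays the role of Higman's relative trace: it turns
maps that commute with a subring centralising `Z` into maps that also commute with `Z`. -/
def nilpotentTrace (Z : A) (n : ℕ) (f : M → N) (m : M) : N :=
  ∑ i ∈ range n, Z ^ i • f (Z ^ (n - 1 - i) • m)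

variable {F : Type*} [FunLike F M N] [AddMonoidHomClass F M N] {Z : A} {n : ℕ}

theorem nilpotentTrace_add (f : F) (m m' : M) :
    nilpotentTrace Z n f (m + m') = nilpotentTrace Z n f m + nilpotentTrace Z n f m' := by
  simp only [nilpotentTrace, smul_add, map_add, sum_add_distrib]

theorem nilpotentTrace_zero (f : F) : nilpotentTrace Z n f 0 = 0 := by
  simp [nilpotentTrace]

theorem nilpotentTrace_smul (hZ : Z ^ n = 0) (f : F) (m : M) :
    nilpotentTrace Z n f (Z • m) = Z • nilpotentTrace Z n f m := by
  set g : ℕ → N := fun i => Z ^ i • f (Z ^ (n - i) • m)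
  have hg0 : g 0 = 0 := by simp [g, hZ]
  have hgn : g n = 0 := by simp [g, hZ]
  calc nilpotentTrace Z n f (Z • m) = ∑ i ∈ range n, g i :=
        sum_congr rfl fun i hi => by
          have : n - 1 - i + 1 = n - i := by have := mem_range.mp hi; omega
          rw [smul_smul, ← pow_succ, this]
    _ = ∑ i ∈ range n, g (i + 1) := by
        rw [← add_zero (∑ i ∈ range n, g i), ← hgn, ← sum_range_succ, sum_range_succ', hg0,
          add_zero]
    _ = Z • nilpotentTrace Z n f m := by
        rw [nilpotentTrace, smul_sum]
        refine sum_congr rfl fun i _ => ?_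
        rw [smul_smul, ← pow_succ', Nat.sub_sub, add_comm 1 i]

end NilpotentTrace

section TraceCriterion

variable {R A : Type*} [Ring R] [Ring A] [Module R A] {Z : A}

theorem pow_smul_smul_comm_of_commute {N : Type*} [AddCommGroup N] [Module A N] [Module R N]
    [IsScalarTower R A N] (hcomm : ∀ r : R, Commute (r • (1 : A)) Z) (i : ℕ) (r : R) (x : N) :
    Z ^ i • r • x = r • Z ^ i • x := by
  rw [← smul_one_smul A r x, smul_smul, ← ((hcomm r).pow_right i).eq, mul_smul, smul_one_smul]

variable {M N : Type*} [AddCommGroup M] [Module A M] [Module R M] [IsScalarTower R A M]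
  [AddCommGroup N] [Module A N] [Module R N] [IsScalarTower R A N]

theorem LinearMap.map_smul_of_span_pow_eq_top
    (hspan : Submodule.span R (Set.range (Z ^ · : ℕ → A)) = ⊤) (f : M →ₗ[R] N)
    (hf : ∀ m, f (Z • m) = Z • f m) (a : A) (m : M) : f (a • m) = a • f m := by
  have hpow (i : ℕ) (m : M) : f (Z ^ i • m) = Z ^ i • f m := by
    induction i generalizing m with
    | zero => simp
    | succ i ih => rw [pow_succ, mul_smul, ih, hf, ← mul_smul]
  have ha : a ∈ Submodule.span R (Set.range (Z ^ · : ℕ → A)) := hspan ▸ Submodule.mem_top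
  induction ha using Submodule.span_induction generalizing m with
  | mem a ha => obtain ⟨i, rfl⟩ := ha; exact hpow i m
  | zero => simp
  | add a b _ _ iha ihb => rw [add_smul, map_add, iha, ihb, add_smul]
  | smul r a _ ih => rw [smul_assoc, map_smul, ih, smul_assoc]

def nilpotentTraceLinearMap (hcomm : ∀ r : R, Commute (r • (1 : A)) Z) (n : ℕ)
    (f : M →ₗ[R] N) : M →ₗ[R] N where
  toFun := nilpotentTrace Z n f
  map_add' := nilpotentTrace_add f
  map_smul' r m := by
    simp only [nilpotentTrace, pow_smul_smul_comm_of_commute hcomm, map_smul, smul_sum,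
      RingHom.id_apply]

theorem Module.Projective.of_nilpotentTrace_eq_id [IsScalarTower R A A] [Module.Projective R M]
    {n : ℕ} (hZ : Z ^ n = 0) (hcomm : ∀ r : R, Commute (r • (1 : A)) Z)
    (hspan : Submodule.span R (Set.range (Z ^ · : ℕ → A)) = ⊤)
    (θ : M →ₗ[R] M) (hθ : ∀ m, nilpotentTrace Z n θ m = m) : Module.Projective A M := by
  obtain ⟨s₀, hs₀⟩ := Module.projective_def'.mp ‹Module.Projective R M›
  set π := Finsupp.linearCombination A (id : M → M)
  set ι : (M →₀ R) →ₗ[R] (M →₀ A) :=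
    Finsupp.mapRange.linearMap (LinearMap.toSpanSingleton R A 1)
  have hπι (v : M →₀ R) : π (ι v) = Finsupp.linearCombination R id v := by
    induction v using Finsupp.induction_linear with
    | zero => simp
    | add v w hv hw => rw [map_add, map_add, hv, hw, map_add]
    | single x r => simp [π, ι]
  set t := nilpotentTraceLinearMap hcomm n (ι ∘ₗ s₀ ∘ₗ θ)
  have hπt (m : M) : π (t m) = m := by
    have hs (m : M) : π (ι (s₀ m)) = m := (hπι _).trans (LinearMap.congr_fun hs₀ m)
    conv_rhs => rw [← hθ m]
    simp [t, nilpotentTraceLinearMap, nilpotentTrace, hs]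
  let s : M →ₗ[A] (M →₀ A) :=
    { t with
      map_smul' := t.map_smul_of_span_pow_eq_top hspan (nilpotentTrace_smul hZ _) }
  exact .of_split s π (LinearMap.ext hπt)

end TraceCriterion

section CyclicGroupAlgebra

theorem sub_one_pow_char_eq_zero {S : Type*} [Ring S] (p : ℕ) [Fact p.Prime] [CharP S p] {g : S}
    (hg : g ^ p = 1) : (g - 1) ^ p = 0 := by
  rw [sub_pow_char_of_commute p (Commute.one_right g), hg, one_pow, sub_self]

variable {R : Type*} [Ring R] {p : ℕ}

theorem single_ofAdd_one_pow_char :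
    (single (Multiplicative.ofAdd (1 : ZMod p)) (1 : R)) ^ p = 1 := by
  rw [single_pow, one_pow, ← ofAdd_nsmul, nsmul_one, ZMod.natCast_self, ofAdd_zero, one_def]

theorem commute_smul_one_single_ofAdd_one_sub_one (r : R) :
    Commute (r • (1 : MonoidAlgebra R (Multiplicative (ZMod p))))
      (single (Multiplicative.ofAdd 1) 1 - 1) := by
  rw [one_def, smul_single', mul_one]
  exact (single_commute_single (Commute.one_left _) (Commute.one_right r)).sub_right
    (Commute.one_right _)

theorem span_pow_single_ofAdd_one_sub_one [NeZero p] :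
    Submodule.span R (Set.range fun i : ℕ =>
      (single (Multiplicative.ofAdd (1 : ZMod p)) (1 : R) - 1) ^ i) = ⊤ := by
  set Z : MonoidAlgebra R (Multiplicative (ZMod p)) := single (Multiplicative.ofAdd 1) 1 - 1
  set S := Submodule.span R (Set.range (Z ^ · : ℕ → _))
  have hgen (i : ℕ) : (Z + 1) ^ i ∈ S := by
    rw [(Commute.one_right Z).add_pow]
    refine Submodule.sum_mem _ fun m _ => ?_
    rw [one_pow, mul_one, ← nsmul_eq_mul']
    exact Submodule.smul_of_tower_mem _ _ (Submodule.subset_span ⟨m, rfl⟩)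
  have hsingle (c : Multiplicative (ZMod p)) : single c (1 : R) = (Z + 1) ^ c.toAdd.val := by
    rw [sub_add_cancel, single_pow, one_pow, ← ofAdd_nsmul, nsmul_one, ZMod.natCast_zmod_val,
      ofAdd_toAdd]
  refine Submodule.eq_top_iff'.mpr fun x => ?_
  induction x using MonoidAlgebra.induction_linear with
  | zero => exact S.zero_mem
  | add x y hx hy => exact S.add_mem hx hy
  | single c r =>
    have : single c r = r • single c (1 : R) := by rw [smul_single', mul_one]
    rw [this, hsingle]
    exact S.smul_mem r (hgen _)

end CyclicGroupAlgebra

section ResolutionModule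

variable {R : Type*} [Ring R] {C : ℕ → Type*} [∀ i, AddCommGroup (C i)] [∀ i, Module R (C i)]
  {A M : Type*} [Semiring A] [AddCommGroup M] [Module A M] [Module R M]

/-- `Z` acts on `⨁ⱼ (C₂ⱼ ⊕ C₂ⱼ₊₁ᵖ⁻¹)` as on the resolution module `M(C_*, ∞)`. -/
structure IsResolutionModuleAction (p : ℕ) (d : ∀ i, C (i + 1) →ₗ[R] C i)
    (ιe : ∀ j, C (2 * j) →ₗ[R] M) (ιo : ∀ j, Fin (p - 1) → C (2 * j + 1) →ₗ[R] M) (Z : A) :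
    Prop where
  smul_even_zero : ∀ x, Z • ιe 0 x = 0
  smul_even_succ : ∀ j (h : 0 < p - 1) x, Z • ιe (j + 1) x = ιo j ⟨0, h⟩ (d (2 * j + 1) x)
  smul_odd : ∀ j (t : Fin (p - 1)) (ht : (t : ℕ) + 1 < p - 1) x,
    Z • ιo j t x = ιo j ⟨t + 1, ht⟩ x
  smul_odd_last : ∀ j (h : p - 2 < p - 1) x, Z • ιo j ⟨p - 2, h⟩ x = ιe j (d (2 * j) x)

namespace IsResolutionModuleAction

variable {p : ℕ} {d : ∀ i, C (i + 1) →ₗ[R] C i} {ιe : ∀ j, C (2 * j) →ₗ[R] M}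
  {ιo : ∀ j, Fin (p - 1) → C (2 * j + 1) →ₗ[R] M} {Z : A}

theorem pow_smul_odd (hZ : IsResolutionModuleAction p d ιe ιo Z) (j : ℕ) (t : Fin (p - 1))
    (s : ℕ) (hs : t + s < p - 1) (x : C (2 * j + 1)) :
    Z ^ s • ιo j t x = ιo j ⟨t + s, hs⟩ x := by
  induction s with
  | zero => simp
  | succ s ih => rw [pow_succ', mul_smul, ih (by omega), hZ.smul_odd j _ hs]; rfl

theorem pow_smul_odd_zero (hZ : IsResolutionModuleAction p d ιe ιo Z) (j : ℕ)
    (t : Fin (p - 1)) (x : C (2 * j + 1)) : Z ^ (t : ℕ) • ιo j ⟨0, t.pos⟩ x = ιo j t x := by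
  simpa using hZ.pow_smul_odd j ⟨0, t.pos⟩ t (by simp) x

theorem pow_smul_odd_of_add_eq (hZ : IsResolutionModuleAction p d ιe ιo Z) (j : ℕ)
    (t : Fin (p - 1)) (s : ℕ) (hs : t + s = p - 1) (x : C (2 * j + 1)) :
    Z ^ s • ιo j t x = ιe j (d (2 * j) x) := by
  obtain ⟨s, rfl⟩ : ∃ s', s = s' + 1 := ⟨s - 1, by omega⟩
  rw [pow_succ', mul_smul, hZ.pow_smul_odd j t s (by omega), ← hZ.smul_odd_last j (by omega)]
  congr
  omega

theorem pow_succ_smul_even_succ (hZ : IsResolutionModuleAction p d ιe ιo Z) (j : ℕ)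
    (t : Fin (p - 1)) (x : C (2 * (j + 1))) :
    Z ^ ((t : ℕ) + 1) • ιe (j + 1) x = ιo j t (d (2 * j + 1) x) := by
  rw [pow_succ, mul_smul, hZ.smul_even_succ j t.pos, hZ.pow_smul_odd_zero]

theorem pow_succ_smul_even_zero (hZ : IsResolutionModuleAction p d ιe ιo Z) (s : ℕ)
    (x : C (2 * 0)) : Z ^ (s + 1) • ιe 0 x = 0 := by
  rw [pow_succ, mul_smul, hZ.smul_even_zero, smul_zero]

variable {θ : M →ₗ[R] M}

theorem apply_pow_smul_even_eq_zero (hZ : IsResolutionModuleAction p d ιe ιo Z)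
    (hθmid : ∀ j (t : Fin (p - 1)) x, (t : ℕ) ≠ p - 2 → θ (ιo j t x) = 0) (j s : ℕ) (hs₀ : 0 < s)
    (hs : s < p - 1) (x : C (2 * j)) : θ (Z ^ s • ιe j x) = 0 := by
  obtain ⟨s, rfl⟩ : ∃ s', s = s' + 1 := ⟨s - 1, by omega⟩
  cases j with
  | zero => rw [hZ.pow_succ_smul_even_zero, map_zero]
  | succ j => exact hZ.pow_succ_smul_even_succ j ⟨s, by omega⟩ x ▸ hθmid _ _ _ (by simp; omega)

theorem apply_pow_smul_odd_eq_zero (hZ : IsResolutionModuleAction p d ιe ιo Z)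
    (hθmid : ∀ j (t : Fin (p - 1)) x, (t : ℕ) ≠ p - 2 → θ (ιo j t x) = 0) (j : ℕ)
    (t : Fin (p - 1)) (s : ℕ) (hs : s < p) (h₁ : t + s ≠ p - 2) (h₂ : t + s ≠ p - 1)
    (x : C (2 * j + 1)) : θ (Z ^ s • ιo j t x) = 0 := by
  rcases lt_or_gt_of_ne h₁ with h | h
  · rw [hZ.pow_smul_odd j t s (by omega)]
    exact hθmid _ _ _ (by simp; omega)
  · obtain ⟨u, rfl⟩ : ∃ u, s = u + (p - 1 - t) := ⟨s - (p - 1 - t), by omega⟩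
    rw [pow_add, mul_smul, hZ.pow_smul_odd_of_add_eq j t _ (by omega)]
    exact hZ.apply_pow_smul_even_eq_zero hθmid j u (by omega) (by omega) _

variable {h : ∀ i, C i →ₗ[R] C (i + 1)}

theorem nilpotentTrace_even (hZ : IsResolutionModuleAction p d ιe ιo Z) (hp : 2 ≤ p)
    (hh₀ : ∀ x, d 0 (h 0 x) = x) (hh : ∀ i x, d (i + 1) (h (i + 1) x) + h i (d i x) = x)
    (hθe : ∀ j (h₀ : 0 < p - 1) x, θ (ιe j x) = ιo j ⟨0, h₀⟩ (h (2 * j) x))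
    (hθlast : ∀ j (t : Fin (p - 1)) x, (t : ℕ) = p - 2 →
      θ (ιo j t x) = ιe (j + 1) (h (2 * j + 1) x))
    (hθmid : ∀ j (t : Fin (p - 1)) x, (t : ℕ) ≠ p - 2 → θ (ιo j t x) = 0)
    (j : ℕ) (x : C (2 * j)) :
    nilpotentTrace Z p θ (ιe j x) = ιe j x := by
  have hlast : Z ^ (p - 1) • θ (Z ^ (p - 1 - (p - 1)) • ιe j x) = ιe j (d _ (h (2 * j) x)) := by
    rw [Nat.sub_self, pow_zero, one_smul, hθe j (by omega),
      hZ.pow_smul_odd_of_add_eq j _ _ (by simp)]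
  have hmid (i : ℕ) (hi : i ∈ range p) (hne : i ≠ p - 1 ∧ i ≠ 0) :
      Z ^ i • θ (Z ^ (p - 1 - i) • ιe j x) = 0 := by
    rw [mem_range] at hi
    rw [hZ.apply_pow_smul_even_eq_zero hθmid j _ (by omega) (by omega), smul_zero]
  rw [nilpotentTrace, sum_eq_add_of_mem (p - 1) 0 (by simp; omega) (by simp; omega) (by omega)
    hmid, hlast, pow_zero, one_smul, show p - 1 - 0 = p - 2 + 1 by omega]
  cases j with
  | zero =>
    rw [hZ.pow_succ_smul_even_zero, map_zero, add_zero]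
    exact congrArg _ (hh₀ x)
  | succ j =>
    rw [hZ.pow_succ_smul_even_succ j ⟨p - 2, by omega⟩, hθlast _ _ _ rfl, ← map_add]
    exact congrArg _ (hh (2 * j + 1) x)

theorem nilpotentTrace_odd (hZ : IsResolutionModuleAction p d ιe ιo Z)
    (hh : ∀ i x, d (i + 1) (h (i + 1) x) + h i (d i x) = x)
    (hθe : ∀ j (h₀ : 0 < p - 1) x, θ (ιe j x) = ιo j ⟨0, h₀⟩ (h (2 * j) x))
    (hθlast : ∀ j (t : Fin (p - 1)) x, (t : ℕ) = p - 2 →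
      θ (ιo j t x) = ιe (j + 1) (h (2 * j + 1) x))
    (hθmid : ∀ j (t : Fin (p - 1)) x, (t : ℕ) ≠ p - 2 → θ (ιo j t x) = 0) (j : ℕ)
    (t : Fin (p - 1)) (x : C (2 * j + 1)) :
    nilpotentTrace Z p θ (ιo j t x) = ιo j t x := by
  have ht := t.isLt
  have hmid (i : ℕ) (hi : i ∈ range p) (hne : i ≠ t + 1 ∧ i ≠ t) :
      Z ^ i • θ (Z ^ (p - 1 - i) • ιo j t x) = 0 := by
    rw [mem_range] at hi
    rw [hZ.apply_pow_smul_odd_eq_zero hθmid j t _ (by omega) (by omega) (by omega), smul_zero]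
  rw [nilpotentTrace, sum_eq_add_of_mem ((t : ℕ) + 1) (t : ℕ) (by simp; omega) (by simp; omega)
    (by omega) hmid, hZ.pow_smul_odd j t _ (by omega), hθlast _ _ _ (by simp; omega),
    hZ.pow_succ_smul_even_succ, hZ.pow_smul_odd_of_add_eq j t _ (by omega), hθe j t.pos,
    hZ.pow_smul_odd_zero, ← map_add]
  exact congrArg _ (hh (2 * j) x)

theorem nilpotentTrace_eq_self (hZ : IsResolutionModuleAction p d ιe ιo Z) (hp : 2 ≤ p)
    (hsurj : Function.Surjective
      (evenOddSumMap (X := fun j => C (2 * j)) (Y := fun j => C (2 * j + 1)) ιe ιo))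
    (hh₀ : ∀ x, d 0 (h 0 x) = x) (hh : ∀ i x, d (i + 1) (h (i + 1) x) + h i (d i x) = x)
    (hθe : ∀ j (h₀ : 0 < p - 1) x, θ (ιe j x) = ιo j ⟨0, h₀⟩ (h (2 * j) x))
    (hθlast : ∀ j (t : Fin (p - 1)) x, (t : ℕ) = p - 2 →
      θ (ιo j t x) = ιe (j + 1) (h (2 * j + 1) x))
    (hθmid : ∀ j (t : Fin (p - 1)) x, (t : ℕ) ≠ p - 2 → θ (ιo j t x) = 0) (m : M) :
    nilpotentTrace Z p θ m = m :=
  evenOddSumMap_induction (P := fun m => nilpotentTrace Z p θ m = m) hsurj (nilpotentTrace_zero θ)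
    (fun a b ha hb => by rw [nilpotentTrace_add, ha, hb])
    (hZ.nilpotentTrace_even hp hh₀ hh hθe hθlast hθmid)
    (hZ.nilpotentTrace_odd hh hθe hθlast hθmid) m

end IsResolutionModuleAction

end ResolutionModule

/-- If `C_*` is an exact (acyclic) complex of projective `kH`-modules in
nonnegative degrees, then the resolution module `M = M(C_*, ∞)` is a projective
`kG`-module, where `kG = kH ⊗ k[Z]/(Z^p)` (equivalently, `M(C_*, ∞)` is zero
in the stable module category of `kG`). -/
theorem resolution_module_of_exact_projective_complex_is_projective
    (k : Type) [Field k] (p : ℕ) (hp : p.Prime) [CharP k p]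
    (H : Type) [Group H]
    (C : ℕ → Type) [∀ i, AddCommGroup (C i)] [∀ i, Module (MonoidAlgebra k H) (C i)]
    (d : ∀ i, C (i + 1) →ₗ[MonoidAlgebra k H] C i)
    (hproj : ∀ i, Module.Projective (MonoidAlgebra k H) (C i))
    -- exactness of `⋯ → C_2 → C_1 → C_0 → 0`
    (hexact : ∀ i, LinearMap.range (d (i + 1)) = LinearMap.ker (d i))
    (hexact0 : Function.Surjective (d 0))
    (M : Type) [AddCommGroup M]
    [Module (MonoidAlgebra (MonoidAlgebra k H) (Multiplicative (ZMod p))) M]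
    [Module (MonoidAlgebra k H) M]
    [IsScalarTower (MonoidAlgebra k H)
      (MonoidAlgebra (MonoidAlgebra k H) (Multiplicative (ZMod p))) M]
    (ιe : (j : ℕ) → (C (2 * j) →ₗ[MonoidAlgebra k H] M))
    (ιo : (j : ℕ) → Fin (p - 1) → (C (2 * j + 1) →ₗ[MonoidAlgebra k H] M))
    (hdecomp : Function.Bijective
      (DirectSum.toModule (MonoidAlgebra k H) ℕ M
        (fun j => LinearMap.coprod (ιe j)
          (LinearMap.lsum (MonoidAlgebra k H)
            (fun _ : Fin (p - 1) => C (2 * j + 1)) ℕ (fun t => ιo j t)))))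
    (Z : MonoidAlgebra (MonoidAlgebra k H) (Multiplicative (ZMod p)))
    (hZ : Z = MonoidAlgebra.single (Multiplicative.ofAdd (1 : ZMod p))
      (1 : MonoidAlgebra k H) - 1)
    (hZ0 : ∀ m : C (2 * 0), Z • ιe 0 m = 0)
    (hZe : ∀ (j : ℕ) (m : C (2 * (j + 1))),
      Z • ιe (j + 1) m = ιo j ⟨0, by have := hp.two_le; omega⟩ (d (2 * j + 1) m))
    (hZo : ∀ (j : ℕ) (t : Fin (p - 1)) (ht : (t : ℕ) + 1 < p - 1) (m : C (2 * j + 1)),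
      Z • ιo j t m = ιo j ⟨(t : ℕ) + 1, ht⟩ m)
    (hZlast : ∀ (j : ℕ) (hl : p - 2 < p - 1) (m : C (2 * j + 1)),
      Z • ιo j ⟨p - 2, hl⟩ m = ιe j (d (2 * j) m)) :
    Module.Projective (MonoidAlgebra (MonoidAlgebra k H) (Multiplicative (ZMod p))) M := by
  have : Fact p.Prime := ⟨hp⟩
  have : CharP (MonoidAlgebra (MonoidAlgebra k H) (Multiplicative (ZMod p))) p :=
    charP_of_injective_algebraMap' k p
  have hZact : IsResolutionModuleAction p d ιe ιo Z := ⟨hZ0, fun j _ => hZe j, hZo, hZlast⟩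
  have := projective_of_bijective_evenOddSumMap hdecomp
  obtain ⟨h, hh₀, hh⟩ := exists_contractingHomotopy hproj hexact hexact0
  obtain ⟨θ, hθe, hθo⟩ := exists_linearMap_comp_evenOddSumMap hdecomp
    (fun j => ιo j ⟨0, by have := hp.two_le; omega⟩ ∘ₗ h (2 * j))
    (fun j t => if (t : ℕ) = p - 2 then ιe (j + 1) ∘ₗ h (2 * j + 1) else 0)
  subst hZ
  exact .of_nilpotentTrace_eq_id (sub_one_pow_char_eq_zero p single_ofAdd_one_pow_char)
    commute_smul_one_single_ofAdd_one_sub_one span_pow_single_ofAdd_one_sub_one θ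
    (hZact.nilpotentTrace_eq_self hp.two_le hdecomp.surjective hh₀ hh (by simp [hθe])
      (fun j t x ht => by simp [hθo, ht]) (fun j t x ht => by simp [hθo, ht]))
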